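/- The blow-up time of the dual scalar Riccati equation is nondecreasing in the parameter: for ρ₁ ≤ ρ₂ one has t^k̃_{ρ₁} ≤ t^k̃_{ρ₂}. Moreover lim_{ρ → +∞} t^k̃_ρ = T, i.e. for every t̃ < T there exists ρ̃ such that t^k̃_ρ > t̃ for all ρ > ρ̃. -/

import Mathlib

/-!
Write the equation as `u' = a u + h u² + g_ρ` with `h ≥ β > 0` and `g_ρ = c - ρ Hb22`
increasing in `ρ`. The right-hand side is positive for large `u`, so a solution issued from
`u(T) = 0` stays bounded above and can only blow up to `-∞`. A Grönwall argument on the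
difference orders the solutions, `k_{ρ₂} ≤ k_{ρ₁}` for `ρ₁ ≤ ρ₂`; hence `k_{ρ₁}` cannot blow
up at a time where `k_{ρ₂}` is still finite. For large `ρ` one has `u' ≥ α + (β/2) u²` with
`α` of order `ρ`, and `arctan` of a rescaled `u` then increases at rate `√(αβ/2)`, so the
solution lives for a time at most `π / √(αβ/2) → 0`.
-/

open Filter Set

/-- Right-hand side of the dual scalar Riccati equation `−k̃̇ = ricD ρ t k̃`. -/
noncomputable def ricD (H11 H13 H14 H21 H22 H33 H44 Hb22 : ℝ → ℝ)
    (ρ t k : ℝ) : ℝ :=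
  -(2 * H21 t + (H13 t) ^ 2 + (H14 t) ^ 2) * k - H11 t * k ^ 2
    - (H22 t - ρ * Hb22 t - H33 t * (H13 t) ^ 2 - H44 t * (H14 t) ^ 2)

open Topology Real

lemma le_of_hasDerivAt_nonneg {f f' : ℝ → ℝ} {a b : ℝ} (hab : a ≤ b)
    (hf : ContinuousOn f (Icc a b)) (hderiv : ∀ t ∈ Ioo a b, HasDerivAt f (f' t) t)
    (hnonneg : ∀ t ∈ Ioo a b, 0 ≤ f' t) : f a ≤ f b := by
  refine monotoneOn_of_hasDerivWithinAt_nonneg (f' := f') (convex_Icc a b) hf (fun t ht => ?_)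
    (fun t ht => ?_) (left_mem_Icc.2 hab) (right_mem_Icc.2 hab) hab
  · rw [interior_Icc] at ht ⊢
    exact (hderiv t ht).hasDerivWithinAt
  · rw [interior_Icc] at ht
    exact hnonneg t ht

lemma exists_first_le {f : ℝ → ℝ} {a b y : ℝ} (hab : a < b)
    (hf : ContinuousOn f (Icc a b)) (ha : y < f a) (hb : f b ≤ y) :
    ∃ τ ∈ Ioc a b, f τ ≤ y ∧ ∀ s ∈ Ico a τ, y < f s := by
  set S : Set ℝ := Icc a b ∩ f ⁻¹' Iic y
  have hSbdd : BddBelow S := ⟨a, fun x hx => hx.1.1⟩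
  have hmem : sInf S ∈ S :=
    (hf.preimage_isClosed_of_isClosed isClosed_Icc isClosed_Iic).csInf_mem
      ⟨b, right_mem_Icc.2 hab.le, hb⟩ hSbdd
  refine ⟨sInf S, ⟨hmem.1.1.lt_of_ne ?_, hmem.1.2⟩, hmem.2, fun s hs => ?_⟩
  · intro hinf
    exact ha.not_ge (hinf ▸ hmem.2)
  · by_contra! hfs
    exact hs.2.not_ge (csInf_le hSbdd ⟨⟨hs.1, hs.2.le.trans hmem.1.2⟩, hfs⟩)

lemma le_of_hasDerivAt_nonneg_of_lt {f f' : ℝ → ℝ} {a b y : ℝ} (hab : a ≤ b)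
    (hf : ContinuousOn f (Icc a b)) (hderiv : ∀ t ∈ Ioo a b, HasDerivAt f (f' t) t)
    (hnonneg : ∀ t ∈ Ioo a b, y < f t → 0 ≤ f' t) (hb : f b ≤ y) : f a ≤ y := by
  by_contra! ha
  obtain ⟨τ, hτ, hfτ, habove⟩ :=
    exists_first_le (hab.lt_of_ne (by rintro rfl; linarith)) hf ha hb
  have hmono : f a ≤ f τ :=
    le_of_hasDerivAt_nonneg hτ.1.le (hf.mono (Icc_subset_Icc_right hτ.2))
      (fun t ht => hderiv t ⟨ht.1, ht.2.trans_le hτ.2⟩)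
      (fun t ht => hnonneg t ⟨ht.1, ht.2.trans_le hτ.2⟩ (habove t ⟨ht.1.le, ht.2⟩))
  linarith

/-- `d t * exp (M t)` with `M ≥ |L|` is nondecreasing wherever it is positive. -/
lemma nonpos_of_hasDerivAt_ge_mul {d d' L : ℝ → ℝ} {a b : ℝ} (hab : a ≤ b)
    (hd : ContinuousOn d (Icc a b)) (hL : ContinuousOn L (Icc a b))
    (hderiv : ∀ t ∈ Ioo a b, HasDerivAt d (d' t) t)
    (hineq : ∀ t ∈ Ioo a b, L t * d t ≤ d' t) (hb : d b ≤ 0) : d a ≤ 0 := by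
  obtain ⟨M, hM⟩ := isCompact_Icc.exists_bound_of_continuousOn hL
  have hexp : ∀ t, HasDerivAt (fun s => exp (M * s)) (exp (M * t) * M) t := fun t => by
    simpa using ((hasDerivAt_id t).const_mul M).exp
  have hψ : d a * exp (M * a) ≤ 0 := by
    refine le_of_hasDerivAt_nonneg_of_lt (f := fun t => d t * exp (M * t))
      (f' := fun t => (d' t + M * d t) * exp (M * t)) hab
      (hd.mul (by fun_prop)) (fun t ht => ?_) (fun t ht hψt => ?_) ?_
    · exact ((hderiv t ht).fun_mul (hexp t)).congr_deriv (by ring)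
    · have hdt : 0 < d t := pos_of_mul_pos_left hψt (exp_pos _).le
      have hLt : -M ≤ L t := neg_le_of_abs_le (hM t (Ioo_subset_Icc_self ht))
      have : 0 ≤ d' t + M * d t := by nlinarith [hineq t ht]
      positivity
    · simpa using mul_nonpos_of_nonpos_of_nonneg hb (exp_pos (M * b)).le
  exact nonpos_of_mul_nonpos_left hψ (exp_pos _)

/-- `arctan u - r t` is nondecreasing, and `arctan` has range of length `π`. -/
lemma mul_sub_lt_pi_of_hasDerivAt {u u' : ℝ → ℝ} {a b r : ℝ} (hab : a ≤ b)
    (hu : ContinuousOn u (Icc a b)) (hderiv : ∀ t ∈ Ioo a b, HasDerivAt u (u' t) t)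
    (hineq : ∀ t ∈ Ioo a b, r * (1 + u t ^ 2) ≤ u' t) : r * (b - a) < π := by
  have hmono : arctan (u a) - r * a ≤ arctan (u b) - r * b := by
    refine le_of_hasDerivAt_nonneg (f := fun t => arctan (u t) - r * t)
      (f' := fun t => 1 / (1 + u t ^ 2) * u' t - r) hab
      ((continuous_arctan.comp_continuousOn hu).sub (by fun_prop))
      (fun t ht => ((hderiv t ht).arctan.sub ((hasDerivAt_id t).const_mul r)).congr_deriv
        (by simp)) (fun t ht => ?_)
    rw [sub_nonneg, one_div_mul_eq_div, le_div_iff₀ (by positivity)]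
    exact hineq t ht
  linarith [arctan_lt_pi_div_two (u b), neg_pi_div_two_lt_arctan (u a)]

lemma mul_mul_sq_lt_pi_sq_of_hasDerivAt {u u' : ℝ → ℝ} {a b α γ : ℝ} (hα : 0 < α) (hγ : 0 < γ)
    (hab : a ≤ b) (hu : ContinuousOn u (Icc a b)) (hderiv : ∀ t ∈ Ioo a b, HasDerivAt u (u' t) t)
    (hineq : ∀ t ∈ Ioo a b, α + γ * u t ^ 2 ≤ u' t) : α * γ * (b - a) ^ 2 < π ^ 2 := by
  set q := √(γ / α)
  have hq : 0 < q := sqrt_pos.2 (div_pos hγ hα)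
  have hq2 : q ^ 2 = γ / α := sq_sqrt (div_pos hγ hα).le
  have hlt : q * α * (b - a) < π := by
    refine mul_sub_lt_pi_of_hasDerivAt hab (continuousOn_const.mul hu)
      (fun t ht => (hderiv t ht).const_mul q) (fun t ht => ?_)
    calc q * α * (1 + (q * u t) ^ 2) = q * (α + q ^ 2 * α * u t ^ 2) := by ring
      _ = q * (α + γ * u t ^ 2) := by rw [hq2, div_mul_cancel₀ _ hα.ne']
      _ ≤ q * u' t := mul_le_mul_of_nonneg_left (hineq t ht) hq.le
  have hsq : (q * α) ^ 2 = α * γ := by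
    rw [mul_pow, hq2]
    field_simp
  calc α * γ * (b - a) ^ 2 = (q * α * (b - a)) ^ 2 := by rw [mul_pow, hsq]
    _ < π ^ 2 := pow_lt_pow_left₀ hlt (by have := sub_nonneg.2 hab; positivity) two_ne_zero

lemma not_tendsto_abs_atTop_of_le {l : Filter ℝ} [l.NeBot] {u v : ℝ → ℝ} {ℓ M : ℝ}
    (hv : Tendsto v l (𝓝 ℓ)) (hle : ∀ᶠ t in l, v t ≤ u t ∧ u t ≤ M) :
    ¬Tendsto (fun t => |u t|) l atTop := by
  intro hu
  have hv_bot : Tendsto v l atBot := by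
    refine tendsto_atBot.2 fun B => ?_
    filter_upwards [hle, hu.eventually_gt_atTop (max M (-B))] with t ⟨hvu, huM⟩ hbig
    rcases abs_cases (u t) with ⟨habs, -⟩ | ⟨habs, -⟩ <;> rw [habs] at hbig
    · linarith [le_max_left M (-B)]
    · linarith [le_max_right M (-B)]
  exact not_tendsto_nhds_of_tendsto_atBot hv_bot ℓ hv

lemma half_mul_sq_sub_le {β A a h x : ℝ} (hβ : 0 < β) (hh : β ≤ h) (ha : |a| ≤ A) :
    β / 2 * x ^ 2 - A ^ 2 / (2 * β) ≤ a * x + h * x ^ 2 := by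
  have hax : -(A * |x|) ≤ a * x := by
    have := mul_le_mul_of_nonneg_right ha (abs_nonneg x)
    linarith [neg_abs_le (a * x), abs_mul a x]
  have hamgm : A * |x| ≤ β / 2 * x ^ 2 + A ^ 2 / (2 * β) := by
    have hsq : β / 2 * x ^ 2 + A ^ 2 / (2 * β) - A * |x| = (β * |x| - A) ^ 2 / (2 * β) := by
      rw [← sq_abs x]
      field_simp
      ring
    linarith [div_nonneg (sq_nonneg (β * |x| - A)) (by positivity : (0 : ℝ) ≤ 2 * β)]
  nlinarith [sq_nonneg x]

section ConstantInThePast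

variable {g : ℝ → ℝ}

lemma image_Iic_eq_image_Icc (h0 : ∀ t ≤ 0, g t = g 0) (T : ℝ) :
    g '' Iic T = g '' Icc (min T 0) T := by
  refine (image_mono Icc_subset_Iic_self).antisymm' ?_
  rintro _ ⟨t, ht, rfl⟩
  rcases le_or_gt t 0 with ht0 | ht0
  · refine ⟨min T 0, ⟨le_rfl, min_le_left T 0⟩, ?_⟩
    rw [h0 t ht0, h0 _ (min_le_right T 0)]
  · exact ⟨t, ⟨min_le_right T 0 |>.trans ht0.le, ht⟩, rfl⟩

lemma isCompact_image_Iic (hg : Continuous g) (h0 : ∀ t ≤ 0, g t = g 0) (T : ℝ) :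
    IsCompact (g '' Iic T) :=
  image_Iic_eq_image_Icc h0 T ▸ isCompact_Icc.image hg

lemma exists_forall_abs_le (hg : Continuous g) (h0 : ∀ t ≤ 0, g t = g 0) (T : ℝ) :
    ∃ A, ∀ t ≤ T, |g t| ≤ A := by
  obtain ⟨A, hA⟩ := (isCompact_image_Iic hg h0 T).isBounded.exists_norm_le
  exact ⟨A, fun t ht => hA _ ⟨t, ht, rfl⟩⟩

lemma exists_pos_forall_le_neg (hg : Continuous g) (h0 : ∀ t ≤ 0, g t = g 0) {T : ℝ}
    (hneg : ∀ t ≤ T, g t < 0) : ∃ δ, 0 < δ ∧ ∀ t ≤ T, g t ≤ -δ := by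
  obtain ⟨_, ⟨s, hs, rfl⟩, hmax⟩ :=
    (isCompact_image_Iic hg h0 T).exists_isGreatest ⟨g T, T, le_refl T, rfl⟩
  exact ⟨-g s, neg_pos.2 (hneg s hs), fun t ht => (neg_neg (g s)).symm ▸ hmax ⟨t, ht, rfl⟩⟩

end ConstantInThePast

def riccati (a h g : ℝ → ℝ) (t x : ℝ) : ℝ := a t * x + h t * x ^ 2 + g t

structure IsBackwardSolution (F : ℝ → ℝ → ℝ) (T : ℝ) (tb : EReal) (u : ℝ → ℝ) : Prop where
  terminal : u T = 0
  continuousOn : ContinuousOn u {t : ℝ | tb < t ∧ t ≤ T}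
  hasDerivAt : ∀ t : ℝ, tb < t → t < T → HasDerivAt u (F t (u t)) t

namespace IsBackwardSolution

variable {F : ℝ → ℝ → ℝ} {T : ℝ} {tb : EReal} {u : ℝ → ℝ} {t : ℝ}

lemma continuousOn_Icc (hu : IsBackwardSolution F T tb u) (ht : tb < t) :
    ContinuousOn u (Icc t T) :=
  hu.continuousOn.mono fun _ hs => ⟨ht.trans_le (EReal.coe_le_coe_iff.2 hs.1), hs.2⟩

lemma hasDerivAt_of_mem_Ioo (hu : IsBackwardSolution F T tb u) (ht : tb < t) {s : ℝ}
    (hs : s ∈ Ioo t T) : HasDerivAt u (F s (u s)) s :=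
  hu.hasDerivAt s (ht.trans (EReal.coe_lt_coe_iff.2 hs.1)) hs.2

variable {a h g g₁ g₂ : ℝ → ℝ} {β : ℝ} {tb₁ tb₂ : EReal} {u₁ u₂ : ℝ → ℝ}

lemma exists_forall_le_of_riccati (hu : IsBackwardSolution (riccati a h g) T tb u)
    (hβ : 0 < β) (hh : ∀ t ≤ T, β ≤ h t) {A G : ℝ} (ha : ∀ t ≤ T, |a t| ≤ A)
    (hg : ∀ t ≤ T, |g t| ≤ G) : ∃ M, ∀ t : ℝ, tb < t → t ≤ T → u t ≤ M := by
  have hlarge : ∀ᶠ x : ℝ in atTop, 0 ≤ x ∧ A ^ 2 / (2 * β) + G < β / 2 * x ^ 2 :=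
    (eventually_ge_atTop 0).and <|
      ((tendsto_pow_atTop two_ne_zero).const_mul_atTop (half_pos hβ)).eventually_gt_atTop _
  obtain ⟨M, hM⟩ := eventually_atTop.1 hlarge
  refine ⟨M, fun t ht htT => le_of_hasDerivAt_nonneg_of_lt htT (hu.continuousOn_Icc ht)
    (fun s hs => hu.hasDerivAt_of_mem_Ioo ht hs) (fun s hs hMs => ?_)
    (hu.terminal ▸ (hM M le_rfl).1)⟩
  have hsT : s ≤ T := hs.2.le
  have hquad := half_mul_sq_sub_le (x := u s) hβ (hh s hsT) (ha s hsT)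
  have hbig := (hM (u s) hMs.le).2
  have := neg_abs_le (g s)
  simp only [riccati]
  linarith [hg s hsT]

/-- The difference `u₂ - u₁` solves a linear equation with coefficient `a + h (u₁ + u₂)`
and a nonnegative forcing `g₂ - g₁`. -/
lemma le_of_riccati (hu₁ : IsBackwardSolution (riccati a h g₁) T tb₁ u₁)
    (hu₂ : IsBackwardSolution (riccati a h g₂) T tb₂ u₂) (ha : Continuous a)
    (hh : Continuous h) (hg : ∀ t ≤ T, g₁ t ≤ g₂ t) (ht₁ : tb₁ < t) (ht₂ : tb₂ < t)
    (htT : t ≤ T) : u₂ t ≤ u₁ t := by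
  have hcont₁ := hu₁.continuousOn_Icc ht₁
  have hcont₂ := hu₂.continuousOn_Icc ht₂
  refine sub_nonpos.1 <| nonpos_of_hasDerivAt_ge_mul (d := fun s => u₂ s - u₁ s)
    (L := fun s => a s + h s * (u₁ s + u₂ s)) htT (hcont₂.sub hcont₁)
    (ha.continuousOn.add (hh.continuousOn.mul (hcont₁.add hcont₂)))
    (fun s hs => (hu₂.hasDerivAt_of_mem_Ioo ht₂ hs).sub (hu₁.hasDerivAt_of_mem_Ioo ht₁ hs))
    (fun s hs => ?_) (by simp [hu₁.terminal, hu₂.terminal])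
  simp only [riccati]
  nlinarith [hg s hs.2.le]

lemma mul_mul_sq_lt_pi_sq_of_riccati (hu : IsBackwardSolution (riccati a h g) T tb u) (hβ : 0 < β)
    (hh : ∀ t ≤ T, β ≤ h t) {A α : ℝ} (hα : 0 < α) (ha : ∀ t ≤ T, |a t| ≤ A)
    (hg : ∀ t ≤ T, α + A ^ 2 / (2 * β) ≤ g t) (ht : tb < t) (htT : t ≤ T) :
    α * (β / 2) * (T - t) ^ 2 < π ^ 2 := by
  refine mul_mul_sq_lt_pi_sq_of_hasDerivAt hα (half_pos hβ) htT (hu.continuousOn_Icc ht)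
    (fun s hs => hu.hasDerivAt_of_mem_Ioo ht hs) (fun s hs => ?_)
  have hsT : s ≤ T := hs.2.le
  have := half_mul_sq_sub_le (x := u s) hβ (hh s hsT) (ha s hsT)
  simp only [riccati]
  linarith [hg s hsT]

end IsBackwardSolution

lemma le_of_tendsto_abs_atTop {T M : ℝ} {tb₁ tb₂ : EReal} {u₁ u₂ : ℝ → ℝ}
    (hu₂ : ContinuousOn u₂ {t : ℝ | tb₂ < t ∧ t ≤ T}) (htb₁ : tb₁ < T)
    (hblow : ⊥ < tb₁ → Tendsto (fun t => |u₁ t|) (𝓝[>] tb₁.toReal) atTop)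
    (hM : ∀ t : ℝ, tb₁ < t → t ≤ T → u₁ t ≤ M)
    (hle : ∀ t : ℝ, tb₁ < t → tb₂ < t → t ≤ T → u₂ t ≤ u₁ t) : tb₁ ≤ tb₂ := by
  by_contra! hlt
  have hbot : ⊥ < tb₁ := bot_le.trans_lt hlt
  set τ := tb₁.toReal
  have hτ : (τ : EReal) = tb₁ := EReal.coe_toReal (htb₁.trans (EReal.coe_lt_top T)).ne hbot.ne'
  have hτT : τ < T := EReal.coe_lt_coe_iff.1 (hτ ▸ htb₁)
  have hdom : ∀ᶠ t : ℝ in 𝓝[>] τ, tb₁ < t ∧ t < T := by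
    filter_upwards [self_mem_nhdsWithin, nhdsWithin_le_nhds (Iio_mem_nhds hτT)] with t ht htT
    exact ⟨hτ ▸ EReal.coe_lt_coe_iff.2 ht, htT⟩
  have hv : Tendsto u₂ (𝓝[>] τ) (𝓝 (u₂ τ)) :=
    ((hu₂ τ ⟨hτ ▸ hlt, hτT.le⟩).mono_of_mem_nhdsWithin <| by
      filter_upwards [hdom] with t ht using ⟨hlt.trans ht.1, ht.2.le⟩).tendsto
  refine not_tendsto_abs_atTop_of_le (M := M) hv ?_ (hblow hbot)
  filter_upwards [hdom] with t ⟨ht₁, htT⟩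
  exact ⟨hle t ht₁ (hlt.trans ht₁) htT.le, hM t ht₁ htT.le⟩

section RiccatiFamily

variable {a h c e : ℝ → ℝ} {T β A C : ℝ} {k : ℝ → ℝ → ℝ} {tb : ℝ → EReal}

theorem monotone_blowupTime_of_riccati
    (hsol : ∀ ρ, IsBackwardSolution (riccati a h fun t => c t - ρ * e t) T (tb ρ) (k ρ))
    (ha : Continuous a) (hh : Continuous h) (hβ : 0 < β) (hhβ : ∀ t ≤ T, β ≤ h t)
    (hA : ∀ t ≤ T, |a t| ≤ A) (hC : ∀ t ≤ T, |c t| ≤ C) {E : ℝ} (hE : ∀ t ≤ T, |e t| ≤ E)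
    (he : ∀ t ≤ T, e t ≤ 0) (htbT : ∀ ρ, tb ρ < T)
    (hblow : ∀ ρ, ⊥ < tb ρ → Tendsto (fun t => |k ρ t|) (𝓝[>] (tb ρ).toReal) atTop) :
    Monotone tb := by
  intro ρ₁ ρ₂ hρ
  have hg₁ (t : ℝ) (ht : t ≤ T) : |c t - ρ₁ * e t| ≤ C + |ρ₁| * E :=
    (abs_sub _ _).trans <| add_le_add (hC t ht) <| (abs_mul ρ₁ _).symm ▸
      mul_le_mul_of_nonneg_left (hE t ht) (abs_nonneg ρ₁)
  obtain ⟨M, hM⟩ := (hsol ρ₁).exists_forall_le_of_riccati hβ hhβ hA hg₁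
  refine le_of_tendsto_abs_atTop (hsol ρ₂).continuousOn (htbT ρ₁) (hblow ρ₁) hM
    fun t h₁ h₂ htT => (hsol ρ₁).le_of_riccati (hsol ρ₂) ha hh (fun s hs => ?_) h₁ h₂ htT
  nlinarith [he s hs]

theorem exists_forall_lt_blowupTime_of_riccati
    (hsol : ∀ ρ, IsBackwardSolution (riccati a h fun t => c t - ρ * e t) T (tb ρ) (k ρ))
    (hβ : 0 < β) (hhβ : ∀ t ≤ T, β ≤ h t) (hA : ∀ t ≤ T, |a t| ≤ A)
    (hC : ∀ t ≤ T, |c t| ≤ C) {δ : ℝ} (hδ : 0 < δ) (he : ∀ t ≤ T, e t ≤ -δ) {t' : ℝ}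
    (ht' : t' < T) : ∃ ρ', ∀ ρ, ρ' < ρ → (t' : EReal) < tb ρ := by
  set K := β / 2 * ((T - t') / 2) ^ 2
  have hK : 0 < K := by have := sub_pos.2 ht'; positivity
  have htends : Tendsto (fun ρ => (δ * ρ - C - A ^ 2 / (2 * β)) * K) atTop atTop :=
    ((tendsto_atTop_add_const_right _ (-(C + A ^ 2 / (2 * β)))
      (tendsto_id.const_mul_atTop hδ)).atTop_mul_const hK).congr fun ρ => by
        simp only [id]; ring
  obtain ⟨ρ', hρ'⟩ :=
    eventually_atTop.1 ((eventually_ge_atTop 0).and (htends.eventually_ge_atTop (π ^ 2)))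
  refine ⟨ρ', fun ρ hρ => ?_⟩
  obtain ⟨hρ0, hlarge⟩ := hρ' ρ hρ.le
  have hα : 0 < δ * ρ - C - A ^ 2 / (2 * β) :=
    (pos_iff_pos_of_mul_pos ((pow_pos pi_pos 2).trans_le hlarge)).2 hK
  by_contra! hle
  have hlife := (hsol ρ).mul_mul_sq_lt_pi_sq_of_riccati hβ hhβ hα hA (t := (t' + T) / 2)
    (fun s hs => by
      have := mul_le_mul_of_nonneg_left (he s hs) hρ0
      linarith [neg_abs_le (c s), hC s hs])
    (hle.trans_lt (EReal.coe_lt_coe_iff.2 (by linarith))) (by linarith)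
  have hhalf : T - (t' + T) / 2 = (T - t') / 2 := by ring
  rw [hhalf, mul_assoc] at hlife
  exact hlarge.not_gt hlife

end RiccatiFamily

theorem stmt_16_general
    (T β : ℝ) (hβ : 0 < β)
    (H11 H12 H13 H14 H21 H22 H33 H44 Hb22 : ℝ → ℝ)
    (hc11 : Continuous H11) (hc13 : Continuous H13)
    (hc14 : Continuous H14) (hc21 : Continuous H21) (hc22 : Continuous H22)
    (hc33 : Continuous H33) (hc44 : Continuous H44) (hcb22 : Continuous Hb22)
    (hconst : ∀ t : ℝ, t ≤ 0 → H11 t = H11 0 ∧ H12 t = H12 0 ∧ H13 t = H13 0 ∧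
      H14 t = H14 0 ∧ H21 t = H21 0 ∧ H22 t = H22 0 ∧ H33 t = H33 0 ∧
      H44 t = H44 0 ∧ Hb22 t = Hb22 0)
    (hbound : ∀ t : ℝ, t ≤ T → β ≤ H11 t ∧ H22 t ≤ -β ∧ H33 t ≤ -β ∧
      H44 t ≤ -β ∧ Hb22 t < 0)
    (k : ℝ → ℝ → ℝ) (tb : ℝ → EReal)
    (htbT : ∀ ρ : ℝ, tb ρ < (T : EReal))
    (hterm : ∀ ρ : ℝ, k ρ T = 0)
    (hcont : ∀ ρ : ℝ, ContinuousOn (k ρ) {t : ℝ | tb ρ < (t : EReal) ∧ t ≤ T})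
    (hode : ∀ ρ t : ℝ, tb ρ < (t : EReal) → t < T →
      HasDerivAt (k ρ) (-(ricD H11 H13 H14 H21 H22 H33 H44 Hb22 ρ t (k ρ t))) t)
    (hblow : ∀ ρ : ℝ, ⊥ < tb ρ →
      Tendsto (fun t => |k ρ t|) (nhdsWithin (tb ρ).toReal (Set.Ioi (tb ρ).toReal)) atTop) :
    (∀ ρ₁ ρ₂ : ℝ, ρ₁ ≤ ρ₂ → tb ρ₁ ≤ tb ρ₂) ∧
    ∀ t' : ℝ, t' < T → ∃ ρ' : ℝ, ∀ ρ : ℝ, ρ' < ρ → (t' : EReal) < tb ρ := by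
  set a : ℝ → ℝ := fun t => 2 * H21 t + H13 t ^ 2 + H14 t ^ 2
  set c : ℝ → ℝ := fun t => H22 t - H33 t * H13 t ^ 2 - H44 t * H14 t ^ 2
  have hsol (ρ : ℝ) :
      IsBackwardSolution (riccati a H11 fun t => c t - ρ * Hb22 t) T (tb ρ) (k ρ) :=
    ⟨hterm ρ, hcont ρ, fun t h₁ h₂ => (hode ρ t h₁ h₂).congr_deriv <| by
      simp only [ricD, riccati, a, c]; ring⟩
  obtain ⟨A, hA⟩ := exists_forall_abs_le (g := a) (by fun_prop) (fun t ht => by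
    obtain ⟨-, -, h13, h14, h21, -⟩ := hconst t ht
    simp only [a, h13, h14, h21]) T
  obtain ⟨C, hC⟩ := exists_forall_abs_le (g := c) (by fun_prop) (fun t ht => by
    obtain ⟨-, -, h13, h14, -, h22, h33, h44, -⟩ := hconst t ht
    simp only [c, h13, h14, h22, h33, h44]) T
  have hb0 (t : ℝ) (ht : t ≤ 0) : Hb22 t = Hb22 0 := (hconst t ht).2.2.2.2.2.2.2.2
  have hneg (t : ℝ) (ht : t ≤ T) : Hb22 t < 0 := (hbound t ht).2.2.2.2
  obtain ⟨E, hE⟩ := exists_forall_abs_le hcb22 hb0 T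
  obtain ⟨δ, hδ, hδle⟩ := exists_pos_forall_le_neg hcb22 hb0 hneg
  have hH11 (t : ℝ) (ht : t ≤ T) : β ≤ H11 t := (hbound t ht).1
  exact ⟨fun ρ₁ ρ₂ hρ => monotone_blowupTime_of_riccati hsol (by fun_prop) hc11 hβ hH11 hA hC
      hE (fun t ht => (hneg t ht).le) htbT hblow hρ,
    fun t' ht' => exists_forall_lt_blowupTime_of_riccati hsol hβ hH11 hA hC hδ hδle ht'⟩

/-- the blow-up time of the dual scalar Riccati equation is
nondecreasing in `ρ`, and `t^k̃_ρ → T` as `ρ → +∞`. -/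
theorem stmt_16
    (T β : ℝ) (hT : 0 < T) (hβ : 0 < β)
    (H11 H12 H13 H14 H21 H22 H33 H44 Hb22 : ℝ → ℝ)
    (hc11 : Continuous H11) (hc12 : Continuous H12) (hc13 : Continuous H13)
    (hc14 : Continuous H14) (hc21 : Continuous H21) (hc22 : Continuous H22)
    (hc33 : Continuous H33) (hc44 : Continuous H44) (hcb22 : Continuous Hb22)
    (hconst : ∀ t : ℝ, t ≤ 0 → H11 t = H11 0 ∧ H12 t = H12 0 ∧ H13 t = H13 0 ∧
      H14 t = H14 0 ∧ H21 t = H21 0 ∧ H22 t = H22 0 ∧ H33 t = H33 0 ∧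
      H44 t = H44 0 ∧ Hb22 t = Hb22 0)
    (hbound : ∀ t : ℝ, t ≤ T → β ≤ H11 t ∧ H22 t ≤ -β ∧ H33 t ≤ -β ∧
      H44 t ≤ -β ∧ Hb22 t < 0)
    (k : ℝ → ℝ → ℝ) (tb : ℝ → EReal)
    (htbT : ∀ ρ : ℝ, tb ρ < (T : EReal))
    (hterm : ∀ ρ : ℝ, k ρ T = 0)
    (hcont : ∀ ρ : ℝ, ContinuousOn (k ρ) {t : ℝ | tb ρ < (t : EReal) ∧ t ≤ T})
    (hode : ∀ ρ t : ℝ, tb ρ < (t : EReal) → t < T →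
      HasDerivAt (k ρ) (-(ricD H11 H13 H14 H21 H22 H33 H44 Hb22 ρ t (k ρ t))) t)
    (hblow : ∀ ρ : ℝ, ⊥ < tb ρ →
      Tendsto (fun t => |k ρ t|) (nhdsWithin (tb ρ).toReal (Set.Ioi (tb ρ).toReal)) atTop) :
    (∀ ρ₁ ρ₂ : ℝ, ρ₁ ≤ ρ₂ → tb ρ₁ ≤ tb ρ₂) ∧
    ∀ t' : ℝ, t' < T → ∃ ρ' : ℝ, ∀ ρ : ℝ, ρ' < ρ → (t' : EReal) < tb ρ :=
  stmt_16_general T β hβ H11 H12 H13 H14 H21 H22 H33 H44 Hb22 hc11 hc13 hc14 hc21 hc22 hc33 hc44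
    hcb22 hconst hbound k tb htbT hterm hcont hode hblow
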